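/- arXiv:1203.1336 — 3 statements merged into one kernel-verified Lean document; each statement's English description precedes it below -/
import Mathlib

section
/- Let α, Δ be positive integers and let G be a finite simple graph with maximum degree at most Δ and independence number at most α. Then the number of edges of G is at most α·(Δ+1 choose 2), and equality holds if and only if G is isomorphic to F_{α,Δ}, the graph consisting of α disjoint copies of the complete graph K_{Δ+1}. -/
/-- The number of edges of a simple graph. -/
noncomputable def edgeCount {V : Type*} (G : SimpleGraph V) : ℕ := G.edgeSet.ncard

/-- The independence number: largest size of a set of pairwise nonadjacent vertices. -/
noncomputable def indNum {V : Type*} (G : SimpleGraph V) : ℕ :=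
  sSup {n | ∃ s : Finset V, (∀ x ∈ s, ∀ y ∈ s, ¬ G.Adj x y) ∧ s.card = n}

/-- A finite set of edges of `G` forming a matching (pairwise vertex-disjoint edges). -/
def IsMatchingFinset {V : Type*} (G : SimpleGraph V) (m : Finset (Sym2 V)) : Prop :=
  ↑m ⊆ G.edgeSet ∧ ∀ e ∈ m, ∀ f ∈ m, e ≠ f → ∀ v : V, ¬(v ∈ e ∧ v ∈ f)

/-- The matching number: largest size of a matching. -/
noncomputable def matNum {V : Type*} (G : SimpleGraph V) : ℕ :=
  sSup {n | ∃ m : Finset (Sym2 V), IsMatchingFinset G m ∧ m.card = n}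

/-- The maximum degree. -/
noncomputable def maxDeg {V : Type*} (G : SimpleGraph V) : ℕ :=
  ⨆ v, (G.neighborSet v).ncard

/-- `Gext α ν`: disjoint union of `K_{2ν+1}` with `α - 1` isolated vertices. -/
def Gext (α ν : ℕ) : SimpleGraph (Fin (2*ν+1) ⊕ Fin (α-1)) :=
  SimpleGraph.fromRel (fun x y => x.isLeft = true ∧ y.isLeft = true)

/-- `Hext α ν`: the complete split graph: clique of size `ν` joined to an
independent set of size `α`. -/
def Hext (α ν : ℕ) : SimpleGraph (Fin ν ⊕ Fin α) :=
  SimpleGraph.fromRel (fun x _ => x.isLeft = true)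

/-- `Fext α Δ`: disjoint union of `α` copies of `K_{Δ+1}`. -/
def Fext (α Δ : ℕ) : SimpleGraph (Fin α × Fin (Δ+1)) :=
  SimpleGraph.fromRel (fun x y => x.1 = y.1)

/-- `Jgraph Δ`: for even `Δ` this is `K_{Δ+1}`; for odd `Δ = 2j-1` it is `K_{2j}`
minus a perfect matching (vertices `2k, 2k+1` are nonadjacent) together with an extra
vertex (the last one) joined to all but one (vertex `0`) of the other vertices. -/
def Jgraph (Δ : ℕ) : SimpleGraph (Fin (2*((Δ+1)/2)+1)) :=
  SimpleGraph.fromRel (fun x y =>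
    if Δ % 2 = 0 then True
    else (x.val < 2*((Δ+1)/2) ∧ y.val < 2*((Δ+1)/2) ∧ x.val/2 ≠ y.val/2) ∨
         (x.val = 2*((Δ+1)/2) ∧ 0 < y.val ∧ y.val < 2*((Δ+1)/2)))

/-- `G` is edge-extremal for `(α, ν)`: it has independence number `α`, matching number `ν`,
and the maximum number of edges among all finite simple graphs with independence number `α`
and matching number `ν`. -/
def EdgeExtremal {V : Type*} [Fintype V] (G : SimpleGraph V) (α ν : ℕ) : Prop :=
  indNum G = α ∧ matNum G = ν ∧
    ∀ (W : Type) [Fintype W] (H : SimpleGraph W),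
      indNum H = α → matNum H = ν → edgeCount H ≤ edgeCount G

/-!
Let `S` be a maximum independent set, so `|S| ≤ α`. By maximality every vertex lies in a closed
neighbourhood `N[s]` with `s ∈ S`, whence `|V| ≤ |S| (Δ + 1)`, and `2 |E| = ∑ deg ≤ |V| Δ`.
In the equality case `G` is `Δ`-regular, `|S| = α`, and the sets `N[s]` (`s ∈ S`) partition `V`.
Two non-adjacent vertices dominated only by `s` could replace `s` in `S`, so each `N[s]` is a
clique, and `G` is the disjoint union of the `α` cliques `N[s] ≅ K_{Δ+1}`.
-/

open Finset SimpleGraph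

lemma Finset.eq_of_mem_of_card_biUnion_eq_sum {ι β : Type*} [DecidableEq ι] [DecidableEq β]
    {s : Finset ι} {f : ι → Finset β} (h : #(s.biUnion f) = ∑ k ∈ s, #(f k))
    {i j : ι} (hi : i ∈ s) (hj : j ∈ s) {x : β} (hxi : x ∈ f i) (hxj : x ∈ f j) : i = j := by
  by_contra hij
  have hsplit : s.biUnion f = (s.erase j).biUnion f ∪ f j := by
    rw [union_comm, ← biUnion_insert, insert_erase hj]
  have hinter : 0 < #((s.erase j).biUnion f ∩ f j) :=
    card_pos.2 ⟨x, mem_inter.2 ⟨mem_biUnion.2 ⟨i, mem_erase.2 ⟨hij, hi⟩, hxi⟩, hxj⟩⟩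
  have := card_union_add_card_inter ((s.erase j).biUnion f) (f j)
  have := card_biUnion_le (s := s.erase j) (t := f)
  rw [← sum_erase_add s _ hj, hsplit] at h
  omega

lemma Nat.two_mul_succ_choose_two (n : ℕ) : 2 * (n + 1).choose 2 = (n + 1) * n := by
  rw [mul_comm, ← Nat.add_one_mul_choose_eq, Nat.choose_one_right]

namespace SimpleGraph

variable {V : Type*} [Fintype V] {G : SimpleGraph V} [DecidableRel G.Adj]

lemma two_mul_card_edgeFinset_le {Δ : ℕ} (hdeg : ∀ v, G.degree v ≤ Δ) :
    2 * #G.edgeFinset ≤ Fintype.card V * Δ := by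
  rw [← sum_degrees_eq_twice_card_edges, ← card_univ, ← smul_eq_mul]
  exact sum_le_card_nsmul _ _ _ fun v _ => hdeg v

lemma IsRegularOfDegree.two_mul_card_edgeFinset {Δ : ℕ} (hG : G.IsRegularOfDegree Δ) :
    2 * #G.edgeFinset = Fintype.card V * Δ := by
  rw [← sum_degrees_eq_twice_card_edges, ← card_univ, ← smul_eq_mul, ← sum_const]
  exact sum_congr rfl fun v _ => hG v

lemma isRegularOfDegree_of_two_mul_card_edgeFinset_eq {Δ : ℕ} (hdeg : ∀ v, G.degree v ≤ Δ)
    (h : 2 * #G.edgeFinset = Fintype.card V * Δ) : G.IsRegularOfDegree Δ := by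
  rw [← sum_degrees_eq_twice_card_edges, ← card_univ, ← smul_eq_mul, ← sum_const] at h
  exact fun v => (sum_eq_sum_iff_of_le fun v _ => hdeg v).1 h v (mem_univ v)

variable [DecidableEq V]

variable (G) in
def closedNbhd (v : V) : Finset V := insert v (G.neighborFinset v)

lemma mem_closedNbhd {v w : V} : w ∈ G.closedNbhd v ↔ w = v ∨ G.Adj v w := by
  simp [closedNbhd]

lemma card_closedNbhd (v : V) : #(G.closedNbhd v) = G.degree v + 1 := by
  rw [closedNbhd, card_insert_of_notMem (by simp), card_neighborFinset_eq_degree]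

namespace IsMaximumIndepSet

variable {S : Finset V}

lemma biUnion_closedNbhd (hS : G.IsMaximumIndepSet S) : S.biUnion G.closedNbhd = univ := by
  refine eq_univ_of_forall fun v => ?_
  by_contra hv
  simp only [mem_biUnion, mem_closedNbhd, not_exists, not_and, not_or] at hv
  have hind : G.IsIndepSet (insert v (S : Set V)) :=
    Set.pairwise_insert.2 ⟨hS.isIndepSet, fun s hs _ => ⟨fun h => (hv s hs).2 h.symm, (hv s hs).2⟩⟩
  exact (hv v ((hS.isMaximalIndepSet S).2 hind (Set.subset_insert _ _) (Set.mem_insert _ _))).1 rfl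

lemma adj_of_forall_mem_closedNbhd (hS : G.IsMaximumIndepSet S) {s u w : V} (hs : s ∈ S)
    (hu : ∀ t ∈ S, u ∈ G.closedNbhd t → t = s) (hw : ∀ t ∈ S, w ∈ G.closedNbhd t → t = s)
    (huw : u ≠ w) : G.Adj u w := by
  by_contra hnadj
  have hfree : ∀ z, (∀ t ∈ S, z ∈ G.closedNbhd t → t = s) →
      ∀ t ∈ S.erase s, z ≠ t ∧ ¬G.Adj t z := by
    intro z hz t ht
    obtain ⟨hts, htS⟩ := mem_erase.1 ht
    exact ⟨fun h => hts (hz t htS (mem_closedNbhd.2 (Or.inl h))),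
      fun h => hts (hz t htS (mem_closedNbhd.2 (Or.inr h)))⟩
  have hT : G.IsIndepSet (insert u (insert w (S.erase s)) : Finset V) := by
    rw [coe_insert, coe_insert, isIndepSet_iff, Set.pairwise_insert, Set.pairwise_insert]
    refine ⟨⟨hS.isIndepSet.mono (coe_subset.2 (erase_subset s S)),
      fun t ht _ => ⟨fun h => (hfree w hw t ht).2 h.symm, (hfree w hw t ht).2⟩⟩, ?_⟩
    rintro t (rfl | ht) -
    · exact ⟨hnadj, fun h => hnadj h.symm⟩
    · exact ⟨fun h => (hfree u hu t ht).2 h.symm, (hfree u hu t ht).2⟩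
  have hTcard : #(insert u (insert w (S.erase s))) = #S + 1 := by
    rw [card_insert_of_notMem, card_insert_of_notMem, card_erase_add_one hs]
    · exact fun h => (hfree w hw w h).1 rfl
    · rw [mem_insert]
      rintro (h | h)
      exacts [huw h, (hfree u hu u h).1 rfl]
  have := hS.maximum _ hT
  omega

lemma card_le_card_mul_add_one (hS : G.IsMaximumIndepSet S) {Δ : ℕ}
    (hdeg : ∀ v, G.degree v ≤ Δ) : Fintype.card V ≤ #S * (Δ + 1) := by
  rw [← card_univ, ← hS.biUnion_closedNbhd]
  exact card_biUnion_le_card_mul _ _ _ fun v _ => by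
    rw [card_closedNbhd]; exact Nat.succ_le_succ (hdeg v)

end IsMaximumIndepSet

end SimpleGraph

lemma fext_adj {α Δ : ℕ} {x y : Fin α × Fin (Δ + 1)} :
    (Fext α Δ).Adj x y ↔ x ≠ y ∧ x.1 = y.1 := by
  rw [Fext, fromRel_adj, eq_comm (a := y.1), or_self]

lemma edgeCount_congr {V W : Type*} {G : SimpleGraph V} {H : SimpleGraph W} (e : G ≃g H) :
    edgeCount G = edgeCount H := by
  rw [edgeCount, edgeCount, ← Nat.card_coe_set_eq, ← Nat.card_coe_set_eq]
  exact Nat.card_congr e.mapEdgeSet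

lemma edgeCount_eq_card_edgeFinset {V : Type*} (G : SimpleGraph V) [Fintype G.edgeSet] :
    edgeCount G = #G.edgeFinset := by
  rw [edgeCount, ← coe_edgeFinset, Set.ncard_coe_finset]

lemma indNum_eq_indepNum {V : Type*} (G : SimpleGraph V) : indNum G = G.indepNum := by
  refine congrArg sSup (Set.ext fun n => exists_congr fun s => ?_)
  rw [isNIndepSet_iff, isIndepSet_iff]
  refine and_congr_left' ⟨fun h x hx y hy _ => h x hx y hy, fun h x hx y hy => ?_⟩
  obtain rfl | hxy := eq_or_ne x y
  exacts [G.irrefl, h hx hy hxy]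

lemma degree_le_of_maxDeg_le {V : Type*} [Fintype V] {G : SimpleGraph V} [DecidableRel G.Adj]
    {Δ : ℕ} (h : maxDeg G ≤ Δ) (v : V) : G.degree v ≤ Δ := by
  refine le_trans ?_ h
  rw [← card_neighborFinset_eq_degree, neighborFinset_def,
    ← Set.ncard_eq_toFinset_card']
  exact le_ciSup (f := fun v => (G.neighborSet v).ncard) (Set.finite_range _).bddAbove v

lemma fext_isRegularOfDegree (α Δ : ℕ) [DecidableRel (Fext α Δ).Adj] :
    (Fext α Δ).IsRegularOfDegree Δ := fun x => by
  have hnbhd : (Fext α Δ).neighborFinset x = ({x.1} ×ˢ univ).erase x := by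
    ext y
    rw [mem_neighborFinset, fext_adj, mem_erase, mem_product, mem_singleton, eq_comm]
    simp [ne_comm]
  rw [← card_neighborFinset_eq_degree, hnbhd, card_erase_of_mem (by simp),
    card_product, card_singleton, card_univ, Fintype.card_fin, one_mul, Nat.add_sub_cancel]

lemma edgeCount_fext (α Δ : ℕ) : edgeCount (Fext α Δ) = α * (Δ + 1).choose 2 := by
  classical
  have h := (fext_isRegularOfDegree α Δ).two_mul_card_edgeFinset
  rw [Fintype.card_prod, Fintype.card_fin, Fintype.card_fin] at h
  rw [edgeCount_eq_card_edgeFinset]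
  apply Nat.eq_of_mul_eq_mul_left two_pos
  rw [h, mul_left_comm, Nat.two_mul_succ_choose_two, mul_assoc]

lemma nonempty_iso_fext_of_adj_iff {V ι : Type*} [Fintype V] {G : SimpleGraph V} [Fintype ι]
    [DecidableEq ι] {Δ : ℕ} (f : V → ι) (hf : ∀ i, Fintype.card {v // f v = i} = Δ + 1)
    (hadj : ∀ u v, G.Adj u v ↔ u ≠ v ∧ f u = f v) :
    Nonempty (G ≃g Fext (Fintype.card ι) Δ) := by
  let e := Fintype.equivFin ι
  let φ : V ≃ Fin (Fintype.card ι) × Fin (Δ + 1) :=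
    (Equiv.sigmaFiberEquiv f).symm.trans <|
      (Equiv.sigmaCongrRight fun i => Fintype.equivFinOfCardEq (hf i)).trans <|
        (Equiv.sigmaEquivProd ι (Fin (Δ + 1))).trans (Equiv.prodCongr e (Equiv.refl _))
  have hφ : ∀ v, (φ v).1 = e (f v) := fun v => rfl
  refine ⟨⟨φ, fun {u v} => ?_⟩⟩
  rw [fext_adj, hadj, hφ, hφ, φ.injective.ne_iff, e.injective.eq_iff]

theorem SimpleGraph.IsMaximumIndepSet.nonempty_iso_fext {V : Type*} [Fintype V] [DecidableEq V]
    {G : SimpleGraph V} [DecidableRel G.Adj] {S : Finset V} (hS : G.IsMaximumIndepSet S) {Δ : ℕ}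
    (hG : G.IsRegularOfDegree Δ) (hcard : Fintype.card V = #S * (Δ + 1)) :
    Nonempty (G ≃g Fext #S Δ) := by
  have huniq : ∀ {v : V}, ∀ {s t}, s ∈ S → t ∈ S → v ∈ G.closedNbhd s → v ∈ G.closedNbhd t →
      s = t := by
    refine fun hs ht => Finset.eq_of_mem_of_card_biUnion_eq_sum ?_ hs ht
    rw [hS.biUnion_closedNbhd, card_univ, hcard, sum_congr rfl fun s _ => by
      rw [card_closedNbhd, hG.degree_eq], sum_const, smul_eq_mul]
  have hcover : ∀ v, ∃ s : S, v ∈ G.closedNbhd s := fun v => by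
    obtain ⟨s, hs, hv⟩ := mem_biUnion.1 (hS.biUnion_closedNbhd ▸ mem_univ v)
    exact ⟨⟨s, hs⟩, hv⟩
  choose b hb using hcover
  have hmem : ∀ {v} {s : S}, v ∈ G.closedNbhd s ↔ b v = s := fun {v s} =>
    ⟨fun h => Subtype.ext (huniq (b v).2 s.2 (hb v) h), fun h => h ▸ hb v⟩
  have hprivate : ∀ v, ∀ t ∈ S, v ∈ G.closedNbhd t → t = b v :=
    fun v t ht hv => huniq ht (b v).2 hv (hb v)
  have hclosed : ∀ v, G.closedNbhd v = G.closedNbhd (b v) := by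
    refine fun v => (eq_of_subset_of_card_le (fun w hw => G.mem_closedNbhd.2 ?_) ?_).symm
    · rw [or_iff_not_imp_left]
      refine fun hwv => hS.adj_of_forall_mem_closedNbhd (b v).2 (hprivate v) ?_ (Ne.symm hwv)
      rw [← hmem.1 hw]
      exact hprivate w
    · rw [card_closedNbhd, card_closedNbhd, hG.degree_eq, hG.degree_eq]
  have hadj : ∀ u v, G.Adj u v ↔ u ≠ v ∧ b u = b v := fun u v => by
    rw [eq_comm (a := b u), ← hmem, ← hclosed, G.mem_closedNbhd]
    constructor
    · exact fun h => ⟨h.ne, Or.inr h⟩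
    · rintro ⟨huv, rfl | h⟩
      exacts [absurd rfl huv, h]
  have hfiber : ∀ s, Fintype.card {v // b v = s} = Δ + 1 := fun s => by
    simp_rw [← hmem, Fintype.card_coe, card_closedNbhd, hG.degree_eq]
  rw [← Fintype.card_coe S]
  exact nonempty_iso_fext_of_adj_iff b hfiber hadj

theorem maxEdges_of_indep_and_maxDegree_general (α Δ : ℕ) (hΔ : 0 < Δ)
    {V : Type*} [Fintype V] (G : SimpleGraph V)
    (hdeg : maxDeg G ≤ Δ) (hind : indNum G ≤ α) :
    edgeCount G ≤ α * (Δ + 1).choose 2 ∧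
      (edgeCount G = α * (Δ + 1).choose 2 ↔ Nonempty (G ≃g Fext α Δ)) := by
  classical
  obtain ⟨S, hS⟩ := G.maximumIndepSet_exists
  have hdegΔ := degree_le_of_maxDeg_le hdeg
  have hSα : #S ≤ α := (indNum_eq_indepNum G ▸ hS.isIndepSet.card_le_indepNum).trans hind
  -- 2|E| ≤ |V| Δ ≤ |S| (Δ + 1) Δ ≤ α (Δ + 1) Δ
  have hE := G.two_mul_card_edgeFinset_le hdegΔ
  have hV := Nat.mul_le_mul_right Δ (hS.card_le_card_mul_add_one hdegΔ)
  have hSΔ := Nat.mul_le_mul_right ((Δ + 1) * Δ) hSα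
  have htarget : 2 * (α * (Δ + 1).choose 2) = α * ((Δ + 1) * Δ) := by
    rw [mul_left_comm, Nat.two_mul_succ_choose_two]
  rw [edgeCount_eq_card_edgeFinset]
  refine ⟨by linarith, fun heq => ?_, fun ⟨e⟩ => ?_⟩
  · have hSeq : #S = α :=
      le_antisymm hSα (Nat.le_of_mul_le_mul_right (by linarith) (by positivity : 0 < (Δ + 1) * Δ))
    have hVeq : Fintype.card V = #S * (Δ + 1) := Nat.eq_of_mul_eq_mul_right hΔ (by linarith)
    have hreg := isRegularOfDegree_of_two_mul_card_edgeFinset_eq hdegΔ (by linarith)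
    exact hSeq ▸ hS.nonempty_iso_fext hreg hVeq
  · rw [← edgeCount_eq_card_edgeFinset, edgeCount_congr e, edgeCount_fext]

/-- If `Δ(G) ≤ Δ` and `α(G) ≤ α` then `|E(G)| ≤ α * C(Δ+1, 2)`,
with equality iff `G` is the disjoint union of `α` copies of `K_{Δ+1}`. -/
theorem maxEdges_of_indep_and_maxDegree (α Δ : ℕ) (hα : 0 < α) (hΔ : 0 < Δ)
    {V : Type*} [Fintype V] (G : SimpleGraph V)
    (hdeg : maxDeg G ≤ Δ) (hind : indNum G ≤ α) :
    edgeCount G ≤ α * (Δ + 1).choose 2 ∧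
      (edgeCount G = α * (Δ + 1).choose 2 ↔ Nonempty (G ≃g Fext α Δ)) :=
  maxEdges_of_indep_and_maxDegree_general α Δ hΔ G hdeg hind
end

section
/- Let α, ν be positive integers with α > 1, and let G be a finite simple graph with independence number α, matching number ν, and the maximum possible number of edges among all finite simple graphs with independence number α and matching number ν. Then G has at least 2ν+2 vertices. -/
/-! The graph `Gext α ν`, a clique `K_{2ν+1}` beside `α - 1` isolated vertices, has independence
number `α`, matching number `ν` and `(2ν+1).choose 2` edges, so an extremal `G` has at least that
many edges. As `α(G) ≥ 2`, `G` misses an edge and has fewer than `n.choose 2` edges, `n = |V|`;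
hence `(2ν+1).choose 2 < n.choose 2`, i.e. `n ≥ 2ν + 2`. -/

open Finset

section Fintype

variable {V : Type*} [Fintype V] {G : SimpleGraph V}

lemma edgeCount_eq_card_edgeFinset_s6 [DecidableRel G.Adj] : edgeCount G = #G.edgeFinset := by
  rw [edgeCount, ← SimpleGraph.coe_edgeFinset, Set.ncard_coe_finset]

lemma edgeCount_lt_choose_two {u v : V} (huv : u ≠ v) (h : ¬G.Adj u v) :
    edgeCount G < (Fintype.card V).choose 2 := by
  classical
  rw [edgeCount_eq_card_edgeFinset_s6, ← SimpleGraph.card_edgeFinset_top_eq_card_choose_two]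
  refine card_lt_card (SimpleGraph.edgeFinset_strict_mono (lt_of_le_of_ne le_top ?_))
  rintro rfl
  exact h huv

lemma exists_indep_finset_card_eq_indNum :
    ∃ s : Finset V, (∀ x ∈ s, ∀ y ∈ s, ¬G.Adj x y) ∧ s.card = indNum G :=
  Nat.sSup_mem (s := {n | ∃ s : Finset V, (∀ x ∈ s, ∀ y ∈ s, ¬G.Adj x y) ∧ s.card = n})
    ⟨0, ∅, by simp⟩ ⟨Fintype.card V, by rintro _ ⟨s, -, rfl⟩; exact card_le_univ s⟩

lemma exists_ne_not_adj_of_one_lt_indNum (h : 1 < indNum G) : ∃ u v, u ≠ v ∧ ¬G.Adj u v := by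
  obtain ⟨s, hs, hcard⟩ := exists_indep_finset_card_eq_indNum (G := G)
  obtain ⟨u, hu, v, hv, huv⟩ := one_lt_card.1 (hcard ▸ h)
  exact ⟨u, v, huv, hs u hu v hv⟩

end Fintype

lemma IsMatchingFinset.two_mul_card_le {V : Type*} [DecidableEq V] {G : SimpleGraph V}
    {m : Finset (Sym2 V)} (hm : IsMatchingFinset G m) {T : Finset V}
    (hT : ∀ x y, G.Adj x y → x ∈ T) : 2 * m.card ≤ T.card := by
  have hdisj : (m : Set (Sym2 V)).PairwiseDisjoint Sym2.toFinset := by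
    intro e he f hf hne
    refine Finset.disjoint_left.2 fun v hve hvf => ?_
    exact hm.2 e he f hf hne v ⟨Sym2.mem_toFinset.1 hve, Sym2.mem_toFinset.1 hvf⟩
  have hsub : m.biUnion Sym2.toFinset ⊆ T := by
    intro v hv
    obtain ⟨e, he, hve⟩ := mem_biUnion.1 hv
    obtain ⟨w, rfl⟩ := Sym2.mem_iff_exists.1 (Sym2.mem_toFinset.1 hve)
    exact hT v w (hm.1 he)
  calc 2 * m.card = ∑ e ∈ m, e.toFinset.card := by
        rw [sum_congr rfl fun e he =>
          Sym2.card_toFinset_of_not_isDiag e (G.not_isDiag_of_mem_edgeSet (hm.1 he))]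
        simp [mul_comm]
    _ = (m.biUnion Sym2.toFinset).card := (card_biUnion hdisj).symm
    _ ≤ T.card := card_le_card hsub

section Gext

variable {α ν : ℕ}

lemma Gext_eq_map_top :
    Gext α ν = (⊤ : SimpleGraph (Fin (2 * ν + 1))).map Function.Embedding.inl := by
  ext x y
  simp only [Gext, SimpleGraph.fromRel_adj, SimpleGraph.map_adj, SimpleGraph.top_adj]
  rcases x with a | a <;> rcases y with b | b <;> simp

lemma edgeCount_Gext : edgeCount (Gext α ν) = (2 * ν + 1).choose 2 := by
  classical
  rw [Gext_eq_map_top, edgeCount, SimpleGraph.edgeSet_map,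
    Set.ncard_image_of_injective _ (Function.Embedding.inl).sym2Map.injective,
    ← edgeCount, edgeCount_eq_card_edgeFinset_s6,
    SimpleGraph.card_edgeFinset_top_eq_card_choose_two, Fintype.card_fin]

lemma Gext_adj {x y : Fin (2 * ν + 1) ⊕ Fin (α - 1)} :
    (Gext α ν).Adj x y ↔ x ≠ y ∧ x.isLeft ∧ y.isLeft := by
  simp only [Gext, SimpleGraph.fromRel_adj]
  tauto

lemma indNum_Gext (hα : 0 < α) : indNum (Gext α ν) = α := by
  refine IsGreatest.csSup_eq ⟨⟨insert (.inl 0) (univ.map .inr), ?_, ?_⟩, ?_⟩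
  · simp [Gext_adj]
  · rw [card_insert_of_notMem (by simp), card_map, card_univ, Fintype.card_fin]
    omega
  · rintro _ ⟨s, hs, rfl⟩
    -- `getRight?` sends the whole clique to `none`, and an independent set meets it at most once
    have hinj : Set.InjOn Sum.getRight? (s : Set (Fin (2 * ν + 1) ⊕ Fin (α - 1))) := by
      intro x hx y hy hxy
      by_contra hne
      rcases x with a | a <;> rcases y with b | b
      · exact hs _ hx _ hy (Gext_adj.2 ⟨hne, rfl, rfl⟩)
      all_goals simp_all
    have := card_le_card_of_injOn _ (fun _ _ => mem_univ _) hinj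
    simp only [card_univ, Fintype.card_option, Fintype.card_fin] at this
    omega

lemma matNum_Gext : matNum (Gext α ν) = ν := by
  classical
  let pair (k : Fin ν) : Sym2 (Fin (2 * ν + 1) ⊕ Fin (α - 1)) :=
    s(.inl ⟨2 * k, by omega⟩, .inl ⟨2 * k + 1, by omega⟩)
  have pair_injective : Function.Injective pair := by
    intro k j h
    simp only [pair, Sym2.eq_iff, Sum.inl.injEq, Fin.mk.injEq] at h
    exact Fin.ext (by omega)
  refine IsGreatest.csSup_eq
    ⟨⟨univ.image pair, ⟨?_, ?_⟩, card_image_of_injective _ pair_injective ▸ card_fin ν⟩, ?_⟩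
  · intro e he
    obtain ⟨k, -, rfl⟩ := mem_image.1 he
    simp [pair, Gext_adj]
  · intro e he f hf hne v ⟨hve, hvf⟩
    obtain ⟨k, -, rfl⟩ := mem_image.1 he
    obtain ⟨j, -, rfl⟩ := mem_image.1 hf
    have hkj : (k : ℕ) ≠ j := fun h => hne (by rw [Fin.ext h])
    simp only [pair, Sym2.mem_iff] at hve hvf
    rcases hve with rfl | rfl <;> rcases hvf with h | h <;>
      · simp only [Sum.inl.injEq, Fin.mk.injEq] at h
        omega
  · rintro _ ⟨m, hm, rfl⟩
    have := hm.two_mul_card_le (T := univ.map .inl) fun x y hxy => by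
      rcases x with a | a
      · simp
      · simp [Gext_adj] at hxy
    simp only [card_map, card_univ, Fintype.card_fin] at this
    omega

end Gext

theorem extremal_card_ge_general (α ν : ℕ) (hα : 1 < α)
    {V : Type*} [Fintype V] (G : SimpleGraph V)
    (hext : EdgeExtremal G α ν) :
    2 * ν + 2 ≤ Fintype.card V := by
  obtain ⟨hind, -, hmax⟩ := hext
  obtain ⟨u, v, huv, hnadj⟩ := exists_ne_not_adj_of_one_lt_indNum (hind ▸ hα)
  have hGext : (2 * ν + 1).choose 2 ≤ edgeCount G :=
    edgeCount_Gext ▸ hmax _ (Gext α ν) (indNum_Gext (by omega)) matNum_Gext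
  by_contra! hsmall
  have := Nat.choose_le_choose 2 (show Fintype.card V ≤ 2 * ν + 1 by omega)
  have := edgeCount_lt_choose_two huv hnadj
  omega

/-- If `α > 1` and `G` is edge-extremal for `(α, ν)`,
then `G` has at least `2ν + 2` vertices. -/
theorem extremal_card_ge (α ν : ℕ) (hα : 1 < α) (hν : 0 < ν)
    {V : Type*} [Fintype V] (G : SimpleGraph V)
    (hext : EdgeExtremal G α ν) :
    2 * ν + 2 ≤ Fintype.card V :=
  extremal_card_ge_general α ν hα G hext
end

section
/- Let α, ν be positive integers and let G be a finite simple graph with independence number α, matching number ν, and the maximum possible number of edges among all finite simple graphs with independence number α and matching number ν. If v is a vertex of G that is covered by every maximum matching of G (i.e., ν(G \ v) = ν(G) − 1), then v is adjacent to every other vertex of G. -/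
/-! If `v` lies in every maximum matching but is not adjacent to `u`, adding the edge `uv` cannot
create a larger matching: such a matching would use `uv`, and dropping it leaves a matching of
`G \ v` of size `ν`. Adding an edge does not raise the independence number, and padding with
isolated vertices restores it to `α`, so the new graph beats `G` by one edge. -/

open SimpleGraph Finset

section Matchings

variable {V W : Type*}

lemma IsMatchingFinset.of_subset {G H : SimpleGraph V} {m m' : Finset (Sym2 V)}
    (hm : IsMatchingFinset G m) (hm' : m' ⊆ m) (hH : ↑m' ⊆ H.edgeSet) :
    IsMatchingFinset H m' :=
  ⟨hH, fun e he f hf => hm.2 e (hm' he) f (hm' hf)⟩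

lemma bddAbove_matchingSizes [Finite V] (G : SimpleGraph V) :
    BddAbove {n | ∃ m : Finset (Sym2 V), IsMatchingFinset G m ∧ m.card = n} := by
  classical
  have := Fintype.ofFinite V
  exact ⟨Fintype.card (Sym2 V), by rintro _ ⟨m, -, rfl⟩; exact card_le_univ m⟩

lemma IsMatchingFinset.card_le_matNum [Finite V] {G : SimpleGraph V} {m : Finset (Sym2 V)}
    (hm : IsMatchingFinset G m) : m.card ≤ matNum G :=
  le_csSup (bddAbove_matchingSizes G) ⟨m, hm, rfl⟩

lemma matNum_le_of_forall {G : SimpleGraph V} {n : ℕ}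
    (h : ∀ m, IsMatchingFinset G m → m.card ≤ n) : matNum G ≤ n :=
  csSup_le ⟨0, ∅, ⟨by simp, by simp⟩, rfl⟩ (by rintro _ ⟨m, hm, rfl⟩; exact h m hm)

lemma matNum_mono [Finite V] {G H : SimpleGraph V} (h : G ≤ H) : matNum G ≤ matNum H :=
  matNum_le_of_forall fun _ hm =>
    (hm.of_subset Subset.rfl (hm.1.trans (edgeSet_mono h))).card_le_matNum

lemma matNum_map [Finite W] (f : V ↪ W) (G : SimpleGraph V) :
    matNum (G.map f) = matNum G := by
  classical
  have : Finite V := Finite.of_injective f f.injective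
  apply le_antisymm
  · refine matNum_le_of_forall fun m hm => ?_
    obtain ⟨m', hm'G, rfl⟩ := subset_set_image_iff.1 (hm.1.trans (edgeSet_map f G).subset)
    rw [card_image_of_injective _ f.sym2Map.injective]
    refine IsMatchingFinset.card_le_matNum ⟨hm'G, fun e he e' he' hne x hx => ?_⟩
    exact hm.2 _ (mem_image_of_mem _ he) _ (mem_image_of_mem _ he') (f.sym2Map.injective.ne hne)
      (f x) ⟨Sym2.mem_map.2 ⟨x, hx.1, rfl⟩, Sym2.mem_map.2 ⟨x, hx.2, rfl⟩⟩
  · refine matNum_le_of_forall fun m hm => ?_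
    rw [← card_map f.sym2Map]
    refine IsMatchingFinset.card_le_matNum ⟨?_, ?_⟩
    · rw [coe_map, edgeSet_map]
      exact Set.image_mono hm.1
    · simp only [mem_map]
      rintro _ ⟨e, he, rfl⟩ _ ⟨e', he', rfl⟩ hne w ⟨hwe, hwe'⟩
      obtain ⟨x, hx, rfl⟩ := Sym2.mem_map.1 hwe
      obtain ⟨x', hx', hxx'⟩ := Sym2.mem_map.1 hwe'
      rw [f.injective hxx'] at hx'
      exact hm.2 e he e' he' (by rintro rfl; exact hne rfl) x ⟨hx, hx'⟩

lemma IsMatchingFinset.card_le_matNum_induce [Finite V] {G : SimpleGraph V}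
    {m : Finset (Sym2 V)} {s : Set V} (hm : IsMatchingFinset G m) (hs : ∀ e ∈ m, ∀ x ∈ e, x ∈ s) :
    m.card ≤ matNum (G.induce s) := by
  rw [← matNum_map (Function.Embedding.subtype (· ∈ s))]
  refine (hm.of_subset Subset.rfl fun e he => ?_).card_le_matNum
  induction e with
  | h a b =>
    have hab : G.Adj a b := hm.1 he
    rw [mem_edgeSet]
    exact ⟨hab.ne, ⟨a, hs _ he a (Sym2.mem_mk_left a b)⟩, ⟨b, hs _ he b (Sym2.mem_mk_right a b)⟩,
      hab, rfl, rfl⟩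

lemma matNum_sup_edge_le [Finite V] (G : SimpleGraph V) (u v : V) :
    matNum (G ⊔ edge u v) ≤ max (matNum G) (matNum (G.induce {x | x ≠ v}) + 1) := by
  classical
  refine matNum_le_of_forall fun m hm => ?_
  have hG : ∀ e ∈ m, e ≠ s(u, v) → e ∈ G.edgeSet := fun e he hne =>
    ((edgeSet_sup G _ ▸ hm.1 he).resolve_right fun h => hne (edgeSet_edge_subset h))
  by_cases huv : s(u, v) ∈ m
  · have hrest : IsMatchingFinset G (m.erase s(u, v)) :=
      hm.of_subset (erase_subset _ _) fun e he => hG e (mem_of_mem_erase he) (ne_of_mem_erase he)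
    have hv : ∀ e ∈ m.erase s(u, v), ∀ x ∈ e, x ∈ {x | x ≠ v} := by
      rintro e he x hx rfl
      exact hm.2 e (mem_of_mem_erase he) _ huv (ne_of_mem_erase he) x ⟨hx, Sym2.mem_mk_right u x⟩
    have := hrest.card_le_matNum_induce hv
    rw [card_erase_of_mem huv] at this
    omega
  · exact le_max_of_le_left
      (hm.of_subset Subset.rfl fun e he => hG e he (ne_of_mem_of_not_mem he huv)).card_le_matNum

end Matchings

section IndependentSets

variable {V W : Type*}

lemma bddAbove_indepSetSizes [Finite V] (G : SimpleGraph V) :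
    BddAbove {n | ∃ s : Finset V, (∀ x ∈ s, ∀ y ∈ s, ¬ G.Adj x y) ∧ s.card = n} := by
  have := Fintype.ofFinite V
  exact ⟨Fintype.card V, by rintro _ ⟨s, -, rfl⟩; exact card_le_univ s⟩

lemma card_le_indNum [Finite V] {G : SimpleGraph V} {s : Finset V}
    (hs : ∀ x ∈ s, ∀ y ∈ s, ¬ G.Adj x y) : s.card ≤ indNum G :=
  le_csSup (bddAbove_indepSetSizes G) ⟨s, hs, rfl⟩

lemma indNum_le_of_forall {G : SimpleGraph V} {n : ℕ}
    (h : ∀ s : Finset V, (∀ x ∈ s, ∀ y ∈ s, ¬ G.Adj x y) → s.card ≤ n) : indNum G ≤ n :=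
  csSup_le ⟨0, ∅, by simp⟩ (by rintro _ ⟨s, hs, rfl⟩; exact h s hs)

lemma exists_card_eq_indNum [Finite V] (G : SimpleGraph V) :
    ∃ s : Finset V, (∀ x ∈ s, ∀ y ∈ s, ¬ G.Adj x y) ∧ s.card = indNum G :=
  Nat.sSup_mem (s := {n | ∃ s : Finset V, (∀ x ∈ s, ∀ y ∈ s, ¬ G.Adj x y) ∧ s.card = n})
    ⟨0, ∅, by simp⟩ (bddAbove_indepSetSizes G)

lemma indNum_anti [Finite V] {G H : SimpleGraph V} (h : G ≤ H) : indNum H ≤ indNum G :=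
  indNum_le_of_forall fun _ hs => card_le_indNum fun x hx y hy hxy => hs x hx y hy (h hxy)

lemma indNum_map [Fintype V] [Fintype W] (f : V ↪ W) (G : SimpleGraph V) :
    indNum (G.map f) = indNum G + (Fintype.card W - Fintype.card V) := by
  classical
  have hrange : (univ.map f).card = Fintype.card V := by rw [card_map, card_univ]
  apply le_antisymm
  · refine indNum_le_of_forall fun t ht => ?_
    have hin : (t.preimage f f.injective.injOn).card ≤ indNum G :=
      card_le_indNum fun x hx y hy hxy => ht _ (mem_preimage.1 hx) _ (mem_preimage.1 hy)
        ⟨f.injective.ne hxy.ne, x, y, hxy, rfl, rfl⟩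
    have hout : {w ∈ t | w ∉ Set.range f}.card + Fintype.card V ≤ Fintype.card W := by
      rw [← hrange, ← card_union_of_disjoint]
      · exact card_le_univ _
      · simp only [Finset.disjoint_left, mem_filter, mem_map, mem_univ, true_and]
        rintro _ ⟨-, hw⟩ ⟨x, rfl⟩
        exact hw ⟨x, rfl⟩
    rw [card_preimage] at hin
    rw [← card_filter_add_card_filter_not (s := t) (· ∈ Set.range f)]
    omega
  · obtain ⟨s, hs, hcard⟩ := exists_card_eq_indNum G
    have hdisj : Disjoint (s.map f) (univ.map f)ᶜ :=
      disjoint_compl_right_iff.2 (map_subset_map.2 (subset_univ s))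
    have ht : ∀ x ∈ s.map f ∪ (univ.map f)ᶜ, ∀ y ∈ s.map f ∪ (univ.map f)ᶜ,
        ¬ (G.map f).Adj x y := by
      rintro _ hx _ hy ⟨-, a, b, hab, rfl, rfl⟩
      simp only [mem_union, mem_map, mem_compl, mem_univ, true_and, f.injective.eq_iff,
        exists_eq_right, exists_eq, not_true_eq_false, or_false] at hx hy
      exact hs a hx b hy hab
    have := card_le_indNum ht
    rw [card_union_of_disjoint hdisj, card_compl, card_map, hrange, hcard] at this
    exact this

end IndependentSets

lemma edgeCount_map {V W : Type*} (f : V ↪ W) (G : SimpleGraph V) :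
    edgeCount (G.map f) = edgeCount G := by
  rw [edgeCount, edgeCount, edgeSet_map, Set.ncard_image_of_injective _ f.sym2Map.injective]

lemma edgeCount_sup_edge {V : Type*} [Finite V] {G : SimpleGraph V} {u v : V}
    (hadj : ¬ G.Adj u v) (hne : u ≠ v) : edgeCount (G ⊔ edge u v) = edgeCount G + 1 := by
  rw [edgeCount, edgeCount, edgeSet_sup, edgeSet_edge_of_ne hne, Set.union_singleton,
    Set.ncard_insert_of_notMem (by simpa using hadj) (Set.toFinite _)]

/-- Padding `H` with isolated vertices moves it into `Type` and raises its independence number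
to exactly `α`. -/
lemma EdgeExtremal.edgeCount_le {V U : Type*} [Fintype V] [Fintype U] {G : SimpleGraph V}
    {α ν : ℕ} (hG : EdgeExtremal G α ν) (H : SimpleGraph U) (hα : indNum H ≤ α)
    (hν : matNum H = ν) : edgeCount H ≤ edgeCount G := by
  let f : U ↪ Fin (Fintype.card U + (α - indNum H)) :=
    (Fintype.equivFin U).toEmbedding.trans (Fin.castLEEmb (Nat.le_add_right _ _))
  rw [← edgeCount_map f H]
  refine hG.2.2 _ _ ?_ (by rw [matNum_map, hν])
  rw [indNum_map, Fintype.card_fin]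
  omega

theorem extremal_essential_vertex_adj_all_general (α ν : ℕ) (hν : 0 < ν)
    {V : Type*} [Fintype V] (G : SimpleGraph V)
    (hext : EdgeExtremal G α ν) (v : V)
    (hv : matNum (G.induce {u | u ≠ v}) = matNum G - 1) :
    ∀ u : V, u ≠ v → G.Adj v u := by
  intro u hu
  by_contra hvu
  have ⟨hGα, hGν, _⟩ := hext
  have hHν : matNum (G ⊔ edge u v) = ν := by
    refine le_antisymm ?_ (hGν ▸ matNum_mono le_sup_left)
    have := matNum_sup_edge_le G u v
    rw [hv, hGν] at this
    omega
  have hHα : indNum (G ⊔ edge u v) ≤ α := hGα ▸ indNum_anti le_sup_left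
  have := hext.edgeCount_le _ hHα hHν
  rw [edgeCount_sup_edge (fun h => hvu h.symm) hu] at this
  omega

/-- If `G` is edge-extremal for `(α, ν)` and `v` is covered by every maximum
matching (i.e. `ν(G \ v) = ν(G) - 1`), then `v` is adjacent to every other vertex. -/
theorem extremal_essential_vertex_adj_all (α ν : ℕ) (hα : 0 < α) (hν : 0 < ν)
    {V : Type*} [Fintype V] (G : SimpleGraph V)
    (hext : EdgeExtremal G α ν) (v : V)
    (hv : matNum (G.induce {u | u ≠ v}) = matNum G - 1) :
    ∀ u : V, u ≠ v → G.Adj v u :=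
  extremal_essential_vertex_adj_all_general α ν hν G hext v hv
end
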